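/- arXiv:0911.1987 — 8 statements merged into one kernel-verified Lean document; each statement's English description precedes it below -/
import Mathlib

section
/- For an abelian category 𝒜 and objects α in Mon(𝒜) and P in 𝒜, there is a natural isomorphism Hom_{Mon(𝒜)}(α, i₁(P)) ≅ Hom_𝒜(Cok(α), P), where Cok(α) denotes the cokernel of the monomorphism α. -/
open CategoryTheory Limits ZeroObject

/-- For an abelian category `𝒜`, an object `α` of `Mon(𝒜)` (a
monomorphism, viewed in the arrow category) and `P` in `𝒜`, there is an
isomorphism `Hom_{Mon(𝒜)}(α, i₁(P)) ≅ Hom_𝒜(Cok(α), P)`, natural in `α`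
(morphisms of `Mon(𝒜)` are exactly the morphisms of `Mor(𝒜)` between
monomorphisms, since `Mon(𝒜)` is a full subcategory). -/
theorem stmt4 {𝒜 : Type u} [Category.{v} 𝒜] [Abelian 𝒜] (P : 𝒜) :
    ∃ e : ∀ α : Arrow 𝒜, Mono α.hom →
        ((α ⟶ Arrow.mk (0 : (0 : 𝒜) ⟶ P)) ≃ (cokernel α.hom ⟶ P)),
      ∀ (α β : Arrow 𝒜) (hα : Mono α.hom) (hβ : Mono β.hom) (φ : α ⟶ β)
        (u : β ⟶ Arrow.mk (0 : (0 : 𝒜) ⟶ P)),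
        e α hα (φ ≫ u) =
          cokernel.map α.hom β.hom φ.left φ.right φ.w.symm ≫ e β hβ u := by
  refine ⟨fun α _ => {
    toFun := fun u => cokernel.desc α.hom u.right (by
      have h := u.w
      simp only [Functor.id_map, Arrow.mk_hom, comp_zero] at h
      exact h.symm)
    invFun := fun f => { left := 0, right := cokernel.π α.hom ≫ f, w := by simp }
    left_inv := fun u => by
      ext
      · apply (isZero_zero 𝒜).eq_of_tgt
      · simp
    right_inv := fun f => by
      apply coequalizer.hom_ext
      simp }, ?_⟩
  intro α β hα hβ φ u
  apply coequalizer.hom_ext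
  dsimp only [DFunLike.coe, EquivLike.coe]
  simp
end

section
/- Let 𝒜 be an abelian category with enough projectives and let P be a projective object of 𝒜. Then i₁(P) = (0 → P) and i₂(P) = (P →^{id} P) are projective objects of the exact category Mon(𝒜), i.e., every conflation of Mon(𝒜) ending in i₁(P) or i₂(P) splits. -/
open CategoryTheory Limits ZeroObject

universe v u

variable {𝒜 : Type u} [Category.{v} 𝒜] [Abelian 𝒜]

/-- A conflation in the exact category `Mon(𝒜)` (realized inside the arrow
category of `𝒜`): all three objects are monomorphisms of `𝒜`, and the induced
sequences of sources and of targets are short exact in `𝒜`. -/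
def MonConflation {α' α α'' : Arrow 𝒜} (f : α' ⟶ α) (g : α ⟶ α'') : Prop :=
  Mono α'.hom ∧ Mono α.hom ∧ Mono α''.hom ∧
  ∃ (w₁ : f.left ≫ g.left = 0) (w₂ : f.right ≫ g.right = 0),
    (ShortComplex.mk f.left g.left w₁).ShortExact ∧
    (ShortComplex.mk f.right g.right w₂).ShortExact

/-- Projective objects of the exact category `Mon(𝒜)`: every conflation ending
in `β` splits. -/
def MonProjective (β : Arrow 𝒜) : Prop :=
  Mono β.hom ∧ ∀ (α' α : Arrow 𝒜) (f : α' ⟶ α) (g : α ⟶ β),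
    MonConflation f g → ∃ s : β ⟶ α, s ≫ g = 𝟙 β

/-- Injective objects of the exact category `Mon(𝒜)`: every conflation starting
at `β` splits. -/
def MonInjective (β : Arrow 𝒜) : Prop :=
  Mono β.hom ∧ ∀ (α α'' : Arrow 𝒜) (f : β ⟶ α) (g : α ⟶ α''),
    MonConflation f g → ∃ r : α ⟶ β, f ≫ r = 𝟙 β

/-- If `𝒜` is abelian with enough projectives and `P` is projective
in `𝒜`, then `i₁(P) = (0 → P)` and `i₂(P) = (P ⟶[id] P)` are projective objects
of the exact category `Mon(𝒜)`. -/
theorem stmt6 [EnoughProjectives 𝒜] (P : 𝒜) (hP : Projective P) :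
    MonProjective (Arrow.mk (0 : (0 : 𝒜) ⟶ P)) ∧ MonProjective (Arrow.mk (𝟙 P)) := by
  constructor
  · constructor
    · exact ⟨fun a b _ => (isZero_zero 𝒜).eq_of_tgt a b⟩
    · rintro α' α f g ⟨_, _, _, w₁, w₂, hL, hR⟩
      haveI := hR.epi_g
      haveI : Projective (Arrow.mk (0 : (0 : 𝒜) ⟶ P)).right := hP
      refine ⟨Arrow.homMk (u := (0 : (0 : 𝒜) ⟶ α.left))
        (v := Projective.factorThru (𝟙 P) g.right) (by simp), ?_⟩
      apply Arrow.hom_ext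
      · exact (isZero_zero 𝒜).eq_of_src _ _
      · simp
  · constructor
    · simpa using (inferInstance : Mono (𝟙 P))
    · rintro α' α f g ⟨_, _, _, w₁, w₂, hL, hR⟩
      haveI := hL.epi_g
      haveI : Projective (Arrow.mk (𝟙 P)).right := hP
      set t := Projective.factorThru (𝟙 P) g.left with ht
      have h1 : t ≫ g.left = 𝟙 P := Projective.factorThru_comp _ _
      refine ⟨Arrow.homMk (u := t) (v := t ≫ α.hom) (by simp), ?_⟩
      apply Arrow.hom_ext
      · simpa using h1
      · have hg := g.w
        simp only [Functor.id_map, Arrow.mk_hom, Category.comp_id] at hg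
        simpa [← hg] using h1
end

section
/- Let 𝒜 be a Frobenius abelian category (enough projectives and injectives, with projectives = injectives) and P a projective object of 𝒜. Then i₁(P) and i₂(P) are injective objects of the exact category Mon(𝒜): every conflation in Mon(𝒜) starting at i₁(P) or i₂(P) splits. -/
open CategoryTheory Limits ZeroObject

universe v u

variable {𝒜 : Type u} [Category.{v} 𝒜] [Abelian 𝒜]

/-- If `𝒜` is a Frobenius abelian category (enough projectives and
injectives, projectives = injectives) and `P` is projective in `𝒜`, then
`i₁(P)` and `i₂(P)` are injective objects of the exact category `Mon(𝒜)`. -/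
theorem stmt7 [EnoughProjectives 𝒜] [EnoughInjectives 𝒜]
    (hfrob : ∀ X : 𝒜, Projective X ↔ Injective X) (P : 𝒜) (hP : Projective P) :
    MonInjective (Arrow.mk (0 : (0 : 𝒜) ⟶ P)) ∧ MonInjective (Arrow.mk (𝟙 P)) := by
  haveI hInj : Injective P := (hfrob P).mp hP
  constructor
  · constructor
    · exact Preadditive.mono_of_cancel_zero _ fun k _ => (isZero_zero 𝒜).eq_of_tgt k 0
    · intro α α'' f g hc
      obtain ⟨_, hmα, hmα'', w₁, w₂, hL, hR⟩ := hc
      have hfl : f.left = 0 := (isZero_zero 𝒜).eq_of_src f.left 0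
      have hglm : Mono g.left := hL.exact.mono_g hfl
      haveI hfrm : Mono f.right := hR.mono_f
      have hsq := Arrow.w g  -- g.left ≫ α''.hom = α.hom ≫ g.right
      obtain ⟨A, hA⟩ : ∃ A : α.left ⟶ α.right, A = α.hom := ⟨α.hom, rfl⟩
      set j : α.left ⊞ P ⟶ α.right := biprod.desc A f.right with hj
      have hjg : j ≫ g.right = biprod.fst ≫ g.left ≫ α''.hom := by
        apply biprod.hom_ext' <;> simp [hj, hA, hsq, w₂]
      have he : (biprod.snd ≫ f.right : α.left ⊞ P ⟶ α.right) = j - biprod.fst ≫ A := by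
        rw [hj, biprod.desc_eq]; abel
      haveI hmono : Mono j := by
        apply Preadditive.mono_of_cancel_zero
        intro Z k hk
        have h1 : k ≫ biprod.fst = 0 := by
          haveI hm : Mono (g.left ≫ α''.hom) := mono_comp _ _
          rw [← cancel_mono (g.left ≫ α''.hom)]
          have : k ≫ j ≫ g.right = 0 := by rw [← Category.assoc, hk, zero_comp]
          rw [hjg] at this
          simpa using this
        have h2 : k ≫ biprod.snd = 0 := by
          rw [← cancel_mono f.right, Category.assoc, he, Preadditive.comp_sub, hk,
            ← Category.assoc, h1]
          simp
        apply biprod.hom_ext <;> simp [h1, h2]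
      let r₂ : α.right ⟶ P := Injective.factorThru biprod.snd j
      have hr₂ : j ≫ r₂ = biprod.snd := Injective.comp_factorThru _ _
      have hα : α.hom ≫ r₂ = 0 := by
        have := biprod.inl ≫= hr₂
        rw [← hA]
        simpa [hj] using this
      have hfr : f.right ≫ r₂ = 𝟙 P := by
        have := biprod.inr ≫= hr₂
        simpa [hj] using this
      refine ⟨Arrow.homMk (u := 0) (v := r₂) ?_, ?_⟩
      · simp [hα]
      · ext
        · exact (isZero_zero 𝒜).eq_of_src _ _
        · simp [hfr]
  · constructor
    · show Mono (𝟙 P); exact ⟨fun {Z} a b h => by simpa using h⟩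
    · intro α α'' f g hc
      obtain ⟨_, hmα, hmα'', w₁, w₂, hL, hR⟩ := hc
      haveI hfrm : Mono f.right := hR.mono_f
      let r₂ : α.right ⟶ P := Injective.factorThru (𝟙 P) f.right
      have hfr : f.right ≫ r₂ = 𝟙 P := Injective.comp_factorThru _ _
      have hsq := Arrow.w f  -- f.left ≫ α.hom = 𝟙 P ≫ f.right
      refine ⟨Arrow.homMk (u := α.hom ≫ r₂) (v := r₂) (by simp), ?_⟩
      ext
      · have : f.left ≫ α.hom = f.right := by simpa using hsq
        simp [this, hfr]
      · simpa using hfr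
end

section
/- Let 𝒜 be an abelian category with enough projectives. Then the exact category Mon(𝒜) has enough projectives: for every monomorphism α in 𝒜 there is an admissible epimorphism i₁(P) ⊕ i₂(P) → α in Mon(𝒜) with P projective in 𝒜, whose kernel again lies in Mon(𝒜). -/
open CategoryTheory Limits ZeroObject

universe v u

variable {𝒜 : Type u} [Category.{v} 𝒜] [Abelian 𝒜]

/-- If `𝒜` is abelian with enough projectives, then `Mon(𝒜)` has
enough projectives: every monomorphism `α` admits an admissible epimorphism
`i₁(P) ⊕ i₂(P) → α` (the source being the arrow `biprod.inr : P ⟶ P ⊞ P`) with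
`P` projective in `𝒜`, both components epi, and whose kernel (computed
componentwise, with the induced map `kernel.map`) again lies in `Mon(𝒜)`. -/
theorem stmt8 [EnoughProjectives 𝒜] (α : Arrow 𝒜) (hα : Mono α.hom) :
    ∃ (P : 𝒜) (_ : Projective P)
      (π : Arrow.mk (biprod.inr : P ⟶ P ⊞ P) ⟶ α),
      Epi π.left ∧ Epi π.right ∧
      Mono (kernel.map π.left π.right (biprod.inr : P ⟶ P ⊞ P) α.hom
        (by simpa using π.w)) := by
  let P := Projective.over (α.left ⊞ α.right)
  let e : P ⟶ α.left ⊞ α.right := Projective.π _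
  let u : P ⟶ α.left := e ≫ biprod.fst
  let v : P ⊞ P ⟶ α.right := biprod.desc (e ≫ biprod.snd) (u ≫ α.hom)
  have hw : u ≫ α.hom = (Arrow.mk (biprod.inr : P ⟶ P ⊞ P)).hom ≫ v := by
    simp [v]
  refine ⟨P, Projective.projective_over _, Arrow.homMk u v hw, ?_, ?_, ?_⟩
  · show Epi u
    exact epi_comp e biprod.fst
  · show Epi v
    have : biprod.inl ≫ v = e ≫ biprod.snd := by simp [v]
    have h : Epi (biprod.inl ≫ v) := by
      rw [this]; exact epi_comp e biprod.snd
    exact epi_of_epi biprod.inl v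
  · set k := kernel.map u v (biprod.inr : P ⟶ P ⊞ P) α.hom (by simpa using hw)
    have hk : k ≫ kernel.ι v = kernel.ι u ≫ (biprod.inr : P ⟶ P ⊞ P) :=
      kernel.lift_ι _ _ _
    have : Mono (k ≫ kernel.ι v) := by
      rw [hk]; infer_instance
    exact mono_of_mono k (kernel.ι v)
end

section
/- Let 𝒜 be a Frobenius abelian category. For every object α of Mon(𝒜) there exist a projective object P of 𝒜 and a conflation α → i₂(P) ⊕ i₁(P) → α'' in Mon(𝒜); in particular Mon(𝒜) has enough injectives. Explicitly, if a : t(α) → P and b' : Cok(α) → P are monomorphisms into a projective P, then the morphism α → i₂(P) ⊕ i₁(P) with components ((a∘α, 0), (a, b)) — where b is b' composed with the projection t(α) → Cok(α) — is an inflation whose cokernel lies in Mon(𝒜). -/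
open CategoryTheory Limits ZeroObject

universe v u

variable {𝒜 : Type u} [Category.{v} 𝒜] [Abelian 𝒜]

open CategoryTheory.Abelian Pseudoelement

private lemma pseudo_id_apply {X : 𝒜} (t : Pseudoelement X) :
    pseudoApply (𝟙 X) t = t :=
  Quotient.inductionOn t fun a => by
    erw [Pseudoelement.pseudoApply_mk']; simp; rfl

/-- Let `𝒜` be a Frobenius abelian category and `α` a monomorphism.
There exist a projective `P` and monomorphisms `a : t(α) ⟶ P`,
`b' : Cok(α) ⟶ P`; and for any such data, the morphism
`α ⟶ i₂(P) ⊕ i₁(P)` (the latter being the arrow `biprod.inl : P ⟶ P ⊞ P`) with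
left component `a ∘ α` and right component `(a, b)` (where `b` is the canonical
projection followed by `b'`) is an inflation whose cokernel again lies in
`Mon(𝒜)`; in particular `Mon(𝒜)` has enough injectives. -/
theorem stmt9 [EnoughProjectives 𝒜] [EnoughInjectives 𝒜]
    (hfrob : ∀ X : 𝒜, Projective X ↔ Injective X)
    (α : Arrow 𝒜) (hα : Mono α.hom) :
    (∃ (P : 𝒜) (a : α.right ⟶ P) (b' : cokernel α.hom ⟶ P),
        Projective P ∧ Mono a ∧ Mono b') ∧
    (∀ (P : 𝒜) (a : α.right ⟶ P) (b' : cokernel α.hom ⟶ P),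
      Projective P → Mono a → Mono b' →
      ∀ (φ : α ⟶ Arrow.mk (biprod.inl : P ⟶ P ⊞ P)),
        φ.left = α.hom ≫ a →
        φ.right = biprod.lift a (cokernel.π α.hom ≫ b') →
        Mono φ.left ∧ Mono φ.right ∧
        Mono (cokernel.map φ.left φ.right α.hom (biprod.inl : P ⟶ P ⊞ P)
          (by simpa using φ.w))) := by
  constructor
  · -- existence of P, a, b'
    set X := α.right ⊞ cokernel α.hom
    refine ⟨Injective.under X, biprod.inl ≫ Injective.ι X, biprod.inr ≫ Injective.ι X,
      (hfrob _).2 inferInstance, ?_, ?_⟩ <;> exact mono_comp _ _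
  · intro P a b' hP ha hb' φ hφl hφr
    have hmono_left : Mono φ.left := by rw [hφl]; exact mono_comp _ _
    have hmono_right : Mono φ.right := by
      have : φ.right ≫ biprod.fst = a := by rw [hφr]; simp
      exact mono_of_mono_fac this
    refine ⟨hmono_left, hmono_right, ?_⟩
    -- pseudoelement diagram chase
    set g := cokernel.map φ.left φ.right α.hom (biprod.inl : P ⟶ P ⊞ P)
      (by simpa using φ.w) with hg
    have hcomm : cokernel.π φ.left ≫ g = biprod.inl ≫ cokernel.π φ.right := by
      simp [hg, cokernel.map]
    -- exactness of the relevant short complexes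
    have hex1 : (ShortComplex.mk φ.right (cokernel.π φ.right)
        (cokernel.condition _)).Exact :=
      ShortComplex.exact_of_g_is_cokernel _ (cokernelIsCokernel _)
    have hex2 : (ShortComplex.mk α.hom (cokernel.π α.hom)
        (cokernel.condition _)).Exact :=
      ShortComplex.exact_of_g_is_cokernel _ (cokernelIsCokernel _)
    apply mono_of_zero_of_map_zero
    intro c hc
    obtain ⟨p, hp⟩ := pseudo_surjective_of_epi (cokernel.π φ.left) c
    have h0 : (cokernel.π φ.right) ((biprod.inl : P ⟶ P ⊞ P) p) = 0 := by
      rw [← Pseudoelement.comp_apply, ← hcomm, Pseudoelement.comp_apply, hp, hc]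
    obtain ⟨y, hy⟩ := pseudo_exact_of_exact hex1 _ h0
    have hby : (cokernel.π α.hom ≫ b') y = 0 := by
      have : φ.right ≫ biprod.snd = cokernel.π α.hom ≫ b' := by rw [hφr]; simp
      rw [← this, Pseudoelement.comp_apply, hy, ← Pseudoelement.comp_apply, biprod.inl_snd, Pseudoelement.zero_apply]
    have hπy : (cokernel.π α.hom) y = 0 := by
      have := pseudo_injective_of_mono b'
      rw [Pseudoelement.comp_apply] at hby
      exact zero_of_map_zero _ this _ hby
    obtain ⟨x, hx⟩ := pseudo_exact_of_exact hex2 _ hπy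
    have hay : a y = p := by
      have hfst : φ.right ≫ biprod.fst = a := by rw [hφr]; simp
      have : (φ.right ≫ biprod.fst) y = ((biprod.inl : P ⟶ P ⊞ P) ≫ biprod.fst) p := by
        rw [Pseudoelement.comp_apply, Pseudoelement.comp_apply, hy]
      rwa [hfst, biprod.inl_fst, pseudo_id_apply] at this
    have hlx : φ.left x = p := by
      rw [hφl, Pseudoelement.comp_apply, hx, hay]
    rw [← hp, ← hlx, ← Pseudoelement.comp_apply, cokernel.condition, Pseudoelement.zero_apply]
end

section
/- Let 𝒜 be a Frobenius abelian category. Then the exact category Mon(𝒜) is Frobenius, and its projective objects are exactly the direct summands of objects of the form i₁(P) ⊕ i₂(P) with P projective in 𝒜. -/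
open CategoryTheory Limits ZeroObject

universe v u

variable {𝒜 : Type u} [Category.{v} 𝒜] [Abelian 𝒜]

lemma shortExact_of_epi {X Y : 𝒜} (e : X ⟶ Y) [Epi e] :
    (ShortComplex.mk (kernel.ι e) e (kernel.condition e)).ShortExact :=
  ShortComplex.ShortExact.mk' (ShortComplex.exact_kernel e) inferInstance inferInstance

lemma shortExact_of_mono {X Y : 𝒜} (m : X ⟶ Y) [Mono m] :
    (ShortComplex.mk m (cokernel.π m) (cokernel.condition m)).ShortExact :=
  ShortComplex.ShortExact.mk' (ShortComplex.exact_cokernel m) inferInstance inferInstance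

lemma comp_desc_expand {X Y Z W : 𝒜} (k : W ⟶ X ⊞ Y) (u : X ⟶ Z) (v : Y ⟶ Z) :
    k ≫ biprod.desc u v = (k ≫ biprod.fst) ≫ u + (k ≫ biprod.snd) ≫ v := by
  calc k ≫ biprod.desc u v
      = k ≫ (biprod.fst ≫ biprod.inl + biprod.snd ≫ biprod.inr) ≫ biprod.desc u v := by
        rw [biprod.total, Category.id_comp]
    _ = (k ≫ biprod.fst) ≫ u + (k ≫ biprod.snd) ≫ v := by
        rw [Preadditive.add_comp, Preadditive.comp_add]
        simp

/-- Retracts of the standard objects `P ⟶ Q ⊞ P` (with `P`, `Q` projective) are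
projective in `Mon(𝒜)`. -/
lemma monProjective_of_retract {P Q : 𝒜} [Projective P] [Projective Q] {β : Arrow 𝒜}
    (hβ : Mono β.hom) (i : β ⟶ Arrow.mk (biprod.inr : P ⟶ Q ⊞ P))
    (r : Arrow.mk (biprod.inr : P ⟶ Q ⊞ P) ⟶ β) (hir : i ≫ r = 𝟙 β) :
    MonProjective β := by
  refine ⟨hβ, fun α' α f g hc => ?_⟩
  obtain ⟨-, -, -, w₁, w₂, hL, hR⟩ := hc
  haveI : Projective ((Arrow.mk (biprod.inr : P ⟶ Q ⊞ P)).left) := ‹Projective P›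
  haveI : Epi g.left := hL.epi_g
  haveI : Epi g.right := hR.epi_g
  let lleft : P ⟶ α.left := Projective.factorThru r.left g.left
  let x₁ : Q ⟶ α.right := Projective.factorThru (biprod.inl ≫ r.right) g.right
  let ℓ : Arrow.mk (biprod.inr : P ⟶ Q ⊞ P) ⟶ α :=
    Arrow.homMk (u := lleft) (v := biprod.desc x₁ (lleft ≫ α.hom)) (by simp)
  have hℓg : ℓ ≫ g = r := by
    apply Arrow.hom_ext
    · exact Projective.factorThru_comp _ _
    · show biprod.desc x₁ (lleft ≫ α.hom) ≫ g.right = r.right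
      apply biprod.hom_ext' <;> simp only [biprod.inl_desc_assoc, biprod.inr_desc_assoc]
      · exact Projective.factorThru_comp _ _
      · have hg : g.left ≫ β.hom = α.hom ≫ g.right := g.w
        have hr : r.left ≫ β.hom = biprod.inr ≫ r.right := r.w
        rw [Category.assoc, ← hg, ← Category.assoc]
        show (lleft ≫ g.left) ≫ β.hom = biprod.inr ≫ r.right
        rw [Projective.factorThru_comp, hr]
  exact ⟨i ≫ ℓ, by rw [Category.assoc, hℓg, hir]⟩

/-- Retracts of the standard objects `I ⟶ J ⊞ I` (with `I`, `J` injective) are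
injective in `Mon(𝒜)`. -/
lemma monInjective_of_retract {I J : 𝒜} [Injective I] [Injective J] {β : Arrow 𝒜}
    (hβ : Mono β.hom) (i : β ⟶ Arrow.mk (biprod.inr : I ⟶ J ⊞ I))
    (r : Arrow.mk (biprod.inr : I ⟶ J ⊞ I) ⟶ β) (hir : i ≫ r = 𝟙 β) :
    MonInjective β := by
  refine ⟨hβ, fun α α'' f g hc => ?_⟩
  obtain ⟨-, hα, hα'', w₁, w₂, hL, hR⟩ := hc
  haveI := hα''
  haveI : Mono f.left := hL.mono_f
  haveI : Mono f.right := hR.mono_f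
  have hfw : f.left ≫ α.hom = β.hom ≫ f.right := f.w
  have hiw : i.left ≫ (biprod.inr : I ⟶ J ⊞ I) = β.hom ≫ i.right := i.w
  have hgw : g.left ≫ α''.hom = α.hom ≫ g.right := g.w
  have hbif : β.hom ≫ i.right ≫ biprod.fst = 0 := by
    rw [← Category.assoc, ← hiw, Category.assoc]
    simp
  have hbis : β.hom ≫ i.right ≫ biprod.snd = i.left := by
    rw [← Category.assoc, ← hiw, Category.assoc]
    simp
  -- the `I`-component of the retraction's right map
  let c : α.right ⟶ I := Injective.factorThru (i.right ≫ biprod.snd) f.right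
  have hc1 : f.right ≫ c = i.right ≫ biprod.snd := Injective.comp_factorThru _ _
  -- the `J`-component, via an extension along the coimage of `q`
  set q : α.left ⊞ β.right ⟶ α.right := biprod.desc α.hom f.right with hq
  set k : kernel q ⟶ α.left ⊞ β.right := kernel.ι q with hkdef
  have ht : (k ≫ biprod.fst) ≫ α.hom = (-(k ≫ biprod.snd)) ≫ f.right := by
    have h : k ≫ biprod.desc α.hom f.right = 0 := kernel.condition q
    rw [comp_desc_expand] at h
    rw [Preadditive.neg_comp]
    exact add_eq_zero_iff_eq_neg.mp h
  have h3 : (k ≫ biprod.fst) ≫ g.left = 0 := by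
    have h4 : ((k ≫ biprod.fst) ≫ g.left) ≫ α''.hom = 0 := by
      rw [Category.assoc, hgw, ← Category.assoc, ht, Category.assoc,
        Preadditive.neg_comp, w₂]
      simp
    exact zero_of_comp_mono _ h4
  haveI : Mono (ShortComplex.mk f.left g.left w₁).f := hL.mono_f
  let s' := hL.exact.lift (k ≫ biprod.fst) h3
  have hs' : s' ≫ f.left = k ≫ biprod.fst := hL.exact.lift_f _ h3
  have ht2' : -(k ≫ biprod.snd) = s' ≫ β.hom := by
    apply (cancel_mono f.right).1
    calc (-(k ≫ biprod.snd)) ≫ f.right = (k ≫ biprod.fst) ≫ α.hom := ht.symm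
      _ = s' ≫ f.left ≫ α.hom := by rw [← hs', Category.assoc]
      _ = s' ≫ β.hom ≫ f.right := by rw [hfw]
      _ = (s' ≫ β.hom) ≫ f.right := by rw [Category.assoc]
  have ht2 : k ≫ biprod.snd = -(s' ≫ β.hom) := by rw [← ht2', neg_neg]
  have hker : k ≫ biprod.desc (0 : α.left ⟶ J) (i.right ≫ biprod.fst) = 0 := by
    rw [comp_desc_expand, comp_zero, zero_add, ht2, Preadditive.neg_comp,
      Category.assoc, hbif]
    simp
  let φ' : Abelian.coimage q ⟶ J := cokernel.desc (kernel.ι q)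
    (biprod.desc (0 : α.left ⟶ J) (i.right ≫ biprod.fst)) hker
  let d : α.right ⟶ J := Injective.factorThru φ' (Abelian.factorThruCoimage q)
  have hd1 : Abelian.factorThruCoimage q ≫ d = φ' := Injective.comp_factorThru _ _
  have hqd : q ≫ d = biprod.desc (0 : α.left ⟶ J) (i.right ≫ biprod.fst) := by
    rw [← Abelian.coimage.fac q, Category.assoc, hd1]
    exact cokernel.π_desc _ _ _
  have hαd : α.hom ≫ d = 0 := by
    have h6 : biprod.inl ≫ q ≫ d
        = biprod.inl ≫ biprod.desc (0 : α.left ⟶ J) (i.right ≫ biprod.fst) := by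
      rw [hqd]
    rw [hq] at h6
    simpa using h6
  have hfd : f.right ≫ d = i.right ≫ biprod.fst := by
    have h7 : biprod.inr ≫ q ≫ d
        = biprod.inr ≫ biprod.desc (0 : α.left ⟶ J) (i.right ≫ biprod.fst) := by
      rw [hqd]
    rw [hq] at h7
    simpa using h7
  let ℓ : α ⟶ Arrow.mk (biprod.inr : I ⟶ J ⊞ I) :=
    Arrow.homMk (u := α.hom ≫ c) (v := biprod.lift d c)
      (by apply biprod.hom_ext <;> simp [hαd])
  have hfl : f ≫ ℓ = i := by
    apply Arrow.hom_ext
    · show f.left ≫ α.hom ≫ c = i.left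
      have e1 : f.left ≫ α.hom ≫ c = β.hom ≫ f.right ≫ c := by
        rw [← Category.assoc, hfw, Category.assoc]
      rw [e1, hc1, hbis]
    · show f.right ≫ biprod.lift d c = i.right
      apply biprod.hom_ext
      · rw [Category.assoc, biprod.lift_fst, hfd]
      · rw [Category.assoc, biprod.lift_snd, hc1]
  exact ⟨ℓ ≫ r, by rw [← Category.assoc, hfl, hir]⟩

/-- Every mono arrow admits a deflation from a standard object `P ⟶ Q ⊞ P`. -/
lemma mon_present [EnoughProjectives 𝒜] (α : Arrow 𝒜) (hα : Mono α.hom) :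
    ∃ (P Q : 𝒜), Projective P ∧ Projective Q ∧
      ∃ (α' : Arrow 𝒜) (f : α' ⟶ Arrow.mk (biprod.inr : P ⟶ Q ⊞ P))
        (g : Arrow.mk (biprod.inr : P ⟶ Q ⊞ P) ⟶ α), MonConflation f g := by
  refine ⟨Projective.over α.left, Projective.over α.right, inferInstance, inferInstance, ?_⟩
  set p : Projective.over α.left ⟶ α.left := Projective.π α.left with hp
  set gr : (Projective.over α.right) ⊞ (Projective.over α.left) ⟶ α.right :=
    biprod.desc (Projective.π α.right) (p ≫ α.hom) with hgr
  haveI : Epi gr := by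
    apply epi_of_epi_fac (f := (biprod.inl : Projective.over α.right ⟶ _))
      (h := Projective.π α.right)
    rw [hgr, biprod.inl_desc]
  have hcond : (kernel.ι p ≫ biprod.inr) ≫ gr = 0 := by
    rw [Category.assoc, hgr, biprod.inr_desc, ← Category.assoc, kernel.condition, zero_comp]
  refine ⟨Arrow.mk (kernel.lift gr (kernel.ι p ≫ biprod.inr) hcond),
    Arrow.homMk (u := kernel.ι p) (v := kernel.ι gr)
      (by simp only [Arrow.mk_hom]; rw [kernel.lift_ι]),
    Arrow.homMk (u := p) (v := gr)
      (by simp only [Arrow.mk_hom]; rw [hgr, biprod.inr_desc]),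
    ?_, ?_, hα, ?_, ?_, ?_, ?_⟩
  · show Mono (kernel.lift gr (kernel.ι p ≫ biprod.inr) hcond)
    exact mono_of_mono_fac (kernel.lift_ι gr (kernel.ι p ≫ biprod.inr) hcond)
  · show Mono (biprod.inr : _ ⟶ _ ⊞ _); infer_instance
  · exact kernel.condition p
  · exact kernel.condition gr
  · exact shortExact_of_epi p
  · exact shortExact_of_epi gr

/-- Every mono arrow admits an inflation into a standard object `I ⟶ J ⊞ I`. -/
lemma mon_copresent [EnoughInjectives 𝒜] (α : Arrow 𝒜) (hα : Mono α.hom) :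
    ∃ (I J : 𝒜), Injective I ∧ Injective J ∧
      ∃ (α'' : Arrow 𝒜) (f : α ⟶ Arrow.mk (biprod.inr : I ⟶ J ⊞ I))
        (g : Arrow.mk (biprod.inr : I ⟶ J ⊞ I) ⟶ α''), MonConflation f g := by
  haveI := hα
  refine ⟨Injective.under α.left, Injective.under (cokernel α.hom),
    inferInstance, inferInstance, ?_⟩
  set u : α.left ⟶ Injective.under α.left := Injective.ι α.left with hu
  haveI : Mono u := by rw [hu]; infer_instance
  set w : α.right ⟶ Injective.under α.left := Injective.factorThru u α.hom with hw
  have hwfac : α.hom ≫ w = u := Injective.comp_factorThru u α.hom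
  set v' : cokernel α.hom ⟶ Injective.under (cokernel α.hom) :=
    Injective.ι (cokernel α.hom) with hv'
  set fr : α.right ⟶ (Injective.under (cokernel α.hom)) ⊞ (Injective.under α.left) :=
    biprod.lift (cokernel.π α.hom ≫ v') w with hfr
  have hsq : u ≫ biprod.inr = α.hom ≫ fr := by
    rw [hfr]
    apply biprod.hom_ext
    · rw [Category.assoc, Category.assoc, biprod.inr_fst, comp_zero, biprod.lift_fst,
        ← Category.assoc, cokernel.condition, zero_comp]
    · rw [Category.assoc, Category.assoc, biprod.inr_snd, Category.comp_id,
        biprod.lift_snd, hwfac]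
  have hE := shortExact_of_mono α.hom
  haveI : Mono (ShortComplex.mk α.hom (cokernel.π α.hom) (cokernel.condition _)).f :=
    hE.mono_f
  haveI hmfr : Mono fr := by
    apply Preadditive.mono_of_cancel_zero
    intro K m hm
    have hm1 : m ≫ cokernel.π α.hom = 0 := by
      have : m ≫ (cokernel.π α.hom ≫ v') = 0 := by
        have := congrArg (fun t => t ≫ biprod.fst) hm
        simpa [hfr] using this
      rw [← Category.assoc] at this
      exact zero_of_comp_mono v' this
    obtain ⟨n, hn⟩ := hE.exact.lift' m hm1
    have hn2 : n ≫ u = 0 := by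
      have : m ≫ w = 0 := by
        have := congrArg (fun t => t ≫ biprod.snd) hm
        simpa [hfr] using this
      rw [← hn, Category.assoc, hwfac] at this
      exact this
    have : n = 0 := zero_of_comp_mono u hn2
    rw [← hn, this, zero_comp]
  have hufr : u ≫ biprod.inr ≫ cokernel.π fr = 0 := by
    rw [← Category.assoc, hsq, Category.assoc, cokernel.condition, comp_zero]
  set h : cokernel u ⟶ cokernel fr :=
    cokernel.desc u (biprod.inr ≫ cokernel.π fr) hufr with hh
  have hE2 := shortExact_of_mono fr
  haveI : Mono (ShortComplex.mk fr (cokernel.π fr) (cokernel.condition _)).f := hE2.mono_f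
  have hπh : cokernel.π u ≫ h = biprod.inr ≫ cokernel.π fr := by
    rw [hh]; exact cokernel.π_desc _ _ _
  have hmonoh : Mono h := by
    apply Preadditive.mono_of_cancel_zero
    intro K kk hkk
    haveI : Epi (pullback.fst kk (cokernel.π u)) := inferInstance
    have hcondPb : pullback.fst kk (cokernel.π u) ≫ kk
        = pullback.snd kk (cokernel.π u) ≫ cokernel.π u := pullback.condition
    have h1 : (pullback.snd kk (cokernel.π u) ≫ biprod.inr) ≫ cokernel.π fr = 0 := by
      rw [Category.assoc, ← hπh, ← Category.assoc, ← hcondPb, Category.assoc, hkk,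
        comp_zero]
    obtain ⟨m, hm⟩ := hE2.exact.lift' (pullback.snd kk (cokernel.π u) ≫ biprod.inr) h1
    have hm1 : m ≫ cokernel.π α.hom = 0 := by
      have : m ≫ (cokernel.π α.hom ≫ v') = 0 := by
        have := congrArg (fun t => t ≫ biprod.fst) hm
        simpa [hfr] using this
      rw [← Category.assoc] at this
      exact zero_of_comp_mono v' this
    obtain ⟨n, hn⟩ := hE.exact.lift' m hm1
    have hsnd : pullback.snd kk (cokernel.π u) = n ≫ u := by
      apply (cancel_mono (biprod.inr :
        Injective.under α.left ⟶ _ ⊞ Injective.under α.left)).1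
      rw [← hm, ← hn, Category.assoc, ← hsq, ← Category.assoc]
    have : pullback.fst kk (cokernel.π u) ≫ kk = 0 := by
      rw [hcondPb, hsnd, Category.assoc, cokernel.condition, comp_zero]
    exact zero_of_epi_comp _ this
  refine ⟨Arrow.mk h,
    Arrow.homMk (u := u) (v := fr) (by simp only [Arrow.mk_hom]; rw [hsq]),
    Arrow.homMk (u := cokernel.π u) (v := cokernel.π fr)
      (by simp only [Arrow.mk_hom]; rw [hπh]),
    hα, ?_, hmonoh, ?_, ?_, ?_, ?_⟩
  · show Mono (biprod.inr : _ ⟶ _ ⊞ _); infer_instance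
  · exact cokernel.condition u
  · exact cokernel.condition fr
  · exact shortExact_of_mono u
  · exact shortExact_of_mono fr

/-- The standard object `P ⟶ Q ⊞ P` is a retract of `R ⟶ R ⊞ R` where `R = Q ⊞ P`. -/
lemma retract_inr_square (Q P : 𝒜) :
    ∃ (j : Arrow.mk (biprod.inr : P ⟶ Q ⊞ P) ⟶
        Arrow.mk (biprod.inr : Q ⊞ P ⟶ (Q ⊞ P) ⊞ (Q ⊞ P)))
      (π : Arrow.mk (biprod.inr : Q ⊞ P ⟶ (Q ⊞ P) ⊞ (Q ⊞ P)) ⟶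
        Arrow.mk (biprod.inr : P ⟶ Q ⊞ P)),
      j ≫ π = 𝟙 (Arrow.mk (biprod.inr : P ⟶ Q ⊞ P)) := by
  refine ⟨Arrow.homMk (u := (biprod.inr : P ⟶ Q ⊞ P))
      (v := biprod.desc (biprod.inl ≫ biprod.inl) (biprod.inr ≫ biprod.inr))
      (by simp),
    Arrow.homMk (u := (biprod.snd : Q ⊞ P ⟶ P))
      (v := biprod.desc (biprod.fst ≫ biprod.inl) (biprod.snd ≫ biprod.inr))
      (by simp), ?_⟩
  apply Arrow.hom_ext
  · simp
  · apply biprod.hom_ext' <;> simp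

/-- If `𝒜` is a Frobenius abelian category, then the exact
category `Mon(𝒜)` is Frobenius: it has enough projectives and enough
injectives, projective and injective objects coincide, and the projective
objects are exactly the direct summands (retracts) of the objects
`i₁(P) ⊕ i₂(P)` (the arrow `biprod.inr : P ⟶ P ⊞ P`) with `P` projective
in `𝒜`. -/
theorem stmt10 [EnoughProjectives 𝒜] [EnoughInjectives 𝒜]
    (hfrob : ∀ X : 𝒜, Projective X ↔ Injective X) :
    (∀ α : Arrow 𝒜, Mono α.hom →
      ∃ (α' β : Arrow 𝒜) (f : α' ⟶ β) (g : β ⟶ α),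
        MonProjective β ∧ MonConflation f g) ∧
    (∀ α : Arrow 𝒜, Mono α.hom →
      ∃ (β α'' : Arrow 𝒜) (f : α ⟶ β) (g : β ⟶ α''),
        MonInjective β ∧ MonConflation f g) ∧
    (∀ β : Arrow 𝒜, Mono β.hom → (MonProjective β ↔ MonInjective β)) ∧
    (∀ β : Arrow 𝒜, Mono β.hom → (MonProjective β ↔
      ∃ (P : 𝒜), Projective P ∧
        ∃ (i : β ⟶ Arrow.mk (biprod.inr : P ⟶ P ⊞ P))
          (r : Arrow.mk (biprod.inr : P ⟶ P ⊞ P) ⟶ β), i ≫ r = 𝟙 β)) := by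
  have hmono_inr : ∀ (X Y : 𝒜), Mono (Arrow.mk (biprod.inr : X ⟶ Y ⊞ X)).hom := by
    intro X Y
    show Mono (biprod.inr : X ⟶ Y ⊞ X)
    infer_instance
  have keyProj : ∀ β : Arrow 𝒜, Mono β.hom → MonProjective β →
      ∃ (P Q : 𝒜), Projective P ∧ Projective Q ∧
        ∃ (i : β ⟶ Arrow.mk (biprod.inr : P ⟶ Q ⊞ P))
          (r : Arrow.mk (biprod.inr : P ⟶ Q ⊞ P) ⟶ β), i ≫ r = 𝟙 β := by
    intro β hβ hp
    obtain ⟨P, Q, hP, hQ, α', f, g, hc⟩ := mon_present β hβ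
    obtain ⟨s, hs⟩ := hp.2 _ _ f g hc
    exact ⟨P, Q, hP, hQ, s, g, hs⟩
  have keyInj : ∀ β : Arrow 𝒜, Mono β.hom → MonInjective β →
      ∃ (I J : 𝒜), Injective I ∧ Injective J ∧
        ∃ (i : β ⟶ Arrow.mk (biprod.inr : I ⟶ J ⊞ I))
          (r : Arrow.mk (biprod.inr : I ⟶ J ⊞ I) ⟶ β), i ≫ r = 𝟙 β := by
    intro β hβ hi
    obtain ⟨I, J, hI, hJ, α'', f, g, hc⟩ := mon_copresent β hβ
    obtain ⟨rr, hrr⟩ := hi.2 _ _ f g hc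
    exact ⟨I, J, hI, hJ, f, rr, hrr⟩
  refine ⟨?_, ?_, ?_, ?_⟩
  · intro α hα
    obtain ⟨P, Q, hP, hQ, α', f, g, hc⟩ := mon_present α hα
    haveI := hP; haveI := hQ
    exact ⟨α', _, f, g,
      monProjective_of_retract (hmono_inr P Q) (𝟙 _) (𝟙 _) (Category.id_comp _), hc⟩
  · intro α hα
    obtain ⟨I, J, hI, hJ, α'', f, g, hc⟩ := mon_copresent α hα
    haveI := hI; haveI := hJ
    exact ⟨_, α'', f, g,
      monInjective_of_retract (hmono_inr I J) (𝟙 _) (𝟙 _) (Category.id_comp _), hc⟩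
  · intro β hβ
    constructor
    · intro hp
      obtain ⟨P, Q, hP, hQ, i, rr, hir⟩ := keyProj β hβ hp
      haveI : Injective P := (hfrob P).1 hP
      haveI : Injective Q := (hfrob Q).1 hQ
      exact monInjective_of_retract hβ i rr hir
    · intro hi
      obtain ⟨I, J, hI, hJ, i, rr, hir⟩ := keyInj β hβ hi
      haveI : Projective I := (hfrob I).2 hI
      haveI : Projective J := (hfrob J).2 hJ
      exact monProjective_of_retract hβ i rr hir
  · intro β hβ
    constructor
    · intro hp
      obtain ⟨P, Q, hP, hQ, i0, r0, h0⟩ := keyProj β hβ hp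
      haveI := hP; haveI := hQ
      obtain ⟨j, π, hjπ⟩ := retract_inr_square Q P
      refine ⟨Q ⊞ P, inferInstance, i0 ≫ j, π ≫ r0, ?_⟩
      rw [Category.assoc, ← Category.assoc j π, hjπ, Category.id_comp, h0]
    · rintro ⟨P, hP, i, rr, hir⟩
      haveI := hP
      exact monProjective_of_retract hβ i rr hir
end

section
/- Let 𝒜 be a Frobenius abelian category. Every object α of Mon(𝒜) fits into a conflation i₂(s(α)) → α → i₁(Cok(α)) in Mon(𝒜), where the first morphism is (id_{s(α)}, α) and the second is (0, π) with π : t(α) → Cok(α) the canonical projection. -/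
open CategoryTheory Limits ZeroObject

universe v u

variable {𝒜 : Type u} [Category.{v} 𝒜] [Abelian 𝒜]

/-- Let `𝒜` be a Frobenius abelian category. Every object `α` of
`Mon(𝒜)` fits into a conflation `i₂(s(α)) → α → i₁(Cok(α))`, where the first
morphism is `(id_{s(α)}, α)` and the second is `(0, π)` with `π` the canonical
projection onto the cokernel. -/
theorem stmt12 [EnoughProjectives 𝒜] [EnoughInjectives 𝒜]
    (hfrob : ∀ X : 𝒜, Projective X ↔ Injective X)
    (α : Arrow 𝒜) (hα : Mono α.hom) :
    MonConflation
      (Arrow.homMk (f := Arrow.mk (𝟙 α.left)) (g := α)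
        (u := 𝟙 α.left) (v := α.hom) (by simp))
      (Arrow.homMk (f := α) (g := Arrow.mk (0 : (0 : 𝒜) ⟶ cokernel α.hom))
        (u := 0) (v := cokernel.π α.hom) (by simp)) := by
  refine ⟨⟨fun _ _ h => by simpa using h⟩, hα, ⟨fun _ _ _ => (isZero_zero 𝒜).eq_of_tgt _ _⟩,
    ⟨by simp, by simp, ?_, ?_⟩⟩
  · have he : (ShortComplex.mk (𝟙 α.left) (0 : α.left ⟶ (0 : 𝒜)) (by simp)).Exact := by
      rw [ShortComplex.exact_iff_epi _ rfl]; infer_instance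
    exact ShortComplex.ShortExact.mk he (mono_f := ⟨fun _ _ h => by simpa using h⟩)
      (epi_g := ⟨fun _ _ _ => (isZero_zero 𝒜).eq_of_src _ _⟩)
  · have he := ShortComplex.exact_of_g_is_cokernel
      (ShortComplex.mk α.hom (cokernel.π α.hom) (by simp)) (cokernelIsCokernel α.hom)
    exact ShortComplex.ShortExact.mk he (mono_f := hα) (epi_g := coequalizer.π_epi)
end

section
/- Let A be a self-injective artin algebra. Then the upper triangular matrix algebra T₂(A) is 1-Gorenstein: the injective dimensions of the regular modules T₂(A) on both sides are at most 1. -/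
open CategoryTheory Limits

universe u

/-- The `2 × 2` upper triangular matrix algebra `T₂(A)` over a ring `A`,
realized as the subring of `2 × 2` matrices whose lower-left entry vanishes. -/
def T2 (A : Type u) [Ring A] : Subring (Matrix (Fin 2) (Fin 2) A) where
  carrier := {M | M 1 0 = 0}
  zero_mem' := rfl
  one_mem' := by simp [Matrix.one_apply]
  add_mem' := by intro a b ha hb; simp_all [Set.mem_setOf_eq, Matrix.add_apply]
  neg_mem' := by intro a ha; simp_all [Matrix.neg_apply]
  mul_mem' := by
    intro a b ha hb
    simp only [Set.mem_setOf_eq, Matrix.mul_apply] at *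
    rw [Fin.sum_univ_two, ha, hb, zero_mul, mul_zero, add_zero]

/-- A module is torsionless if it embeds into a projective module. -/
def Torsionless {Λ : Type u} [Ring Λ] (M : ModuleCat Λ) : Prop :=
  ∃ (Q : ModuleCat Λ) (f : M ⟶ Q), Projective Q ∧ Mono f

/-- A totally acyclic complex of (finitely generated) projective `Λ`-modules:
an acyclic complex of projectives which stays acyclic after applying
`Hom_Λ(-, Λ)`. -/
def TotallyAcyclic {Λ : Type u} [Ring Λ] (P : CochainComplex (ModuleCat Λ) ℤ) : Prop :=
  (∀ n, Projective (P.X n) ∧ Module.Finite Λ (P.X n)) ∧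
  (∀ i, P.ExactAt i) ∧
  (∀ i, (((preadditiveYoneda.obj (ModuleCat.of Λ Λ)).mapHomologicalComplex
      _).obj P.op).ExactAt i)

/-- A module is Gorenstein-projective if it is the zeroth cocycle of a totally
acyclic complex of projectives. -/
def GorensteinProjective {Λ : Type u} [Ring Λ] (M : ModuleCat Λ) : Prop :=
  ∃ P : CochainComplex (ModuleCat Λ) ℤ,
    TotallyAcyclic P ∧ Nonempty ((kernel (P.d 0 1)) ≅ M)

/-- The regular module of the ring `Λ` has injective dimension at most `1`:
there is a short exact sequence `0 → Λ → I⁰ → I¹ → 0` with `I⁰, I¹`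
injective. -/
def RegularInjDimLE1 (Λ : Type u) [Ring Λ] : Prop :=
  ∃ S : ShortComplex (ModuleCat Λ), S.ShortExact ∧
    Injective S.X₂ ∧ Injective S.X₃ ∧ Nonempty (S.X₁ ≅ ModuleCat.of Λ Λ)

section
variable {A : Type} {Λ : Type} [Ring A] [Ring Λ]

/-- coextension of scalars of `A` along `φ` -/
def CoextSet (φ : A →+* Λ) : AddSubgroup (Λ →+ A) where
  carrier := {h | ∀ (a : A) (x : Λ), h (φ a * x) = a * h x}
  add_mem' := by intro f g hf hg a x; simp [hf a x, hg a x, mul_add]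
  zero_mem' := by intro a x; simp
  neg_mem' := by intro f hf a x; simp [hf a x]

variable {φ : A →+* Λ}

instance : Module Λ (CoextSet φ) where
  smul t h := ⟨(h : Λ →+ A).comp (AddMonoidHom.mulRight t), fun a x => by
    simpa [mul_assoc] using h.2 a (x * t)⟩
  one_smul h := Subtype.ext (AddMonoidHom.ext fun x =>
    show (h : Λ →+ A) (x * 1) = (h : Λ →+ A) x by rw [mul_one])
  mul_smul t s h := Subtype.ext (AddMonoidHom.ext fun x =>
    show (h : Λ →+ A) (x * (t * s)) = (h : Λ →+ A) (x * t * s) by rw [mul_assoc])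
  smul_zero t := Subtype.ext (AddMonoidHom.ext fun x => rfl)
  smul_add t f g := Subtype.ext (AddMonoidHom.ext fun x => rfl)
  add_smul t s h := Subtype.ext (AddMonoidHom.ext fun x =>
    show (h : Λ →+ A) (x * (t + s)) = (h : Λ →+ A) (x * t) + (h : Λ →+ A) (x * s) by
      rw [mul_add, map_add])
  zero_smul h := Subtype.ext (AddMonoidHom.ext fun x =>
    show (h : Λ →+ A) (x * 0) = 0 by rw [mul_zero, map_zero])

@[simp] lemma CoextSet.smul_apply (t : Λ) (h : CoextSet φ) (x : Λ) :
    ((t • h : CoextSet φ) : Λ →+ A) x = (h : Λ →+ A) (x * t) := rfl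

end

section Inj
variable {R : Type} [Ring R]

lemma injective_of_retract {M N : Type} [AddCommGroup M] [AddCommGroup N]
    [Module R M] [Module R N] (i : M →ₗ[R] N) (p : N →ₗ[R] M)
    (hpi : ∀ m, p (i m) = m) (hN : Injective (ModuleCat.of R N)) :
    Injective (ModuleCat.of R M) := by
  constructor
  intro X Y g f hf
  obtain ⟨h, hh⟩ := hN.factors (g ≫ ModuleCat.ofHom i) f
  refine ⟨h ≫ ModuleCat.ofHom p, ?_⟩
  rw [← Category.assoc, hh, Category.assoc]
  ext x
  exact hpi (g x)

lemma injective_prod {M N : Type} [AddCommGroup M] [AddCommGroup N]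
    [Module R M] [Module R N]
    (hM : Injective (ModuleCat.of R M)) (hN : Injective (ModuleCat.of R N)) :
    Injective (ModuleCat.of R (M × N)) := by
  constructor
  intro X Y g f hf
  obtain ⟨h₁, hh₁⟩ := hM.factors (g ≫ ModuleCat.ofHom (LinearMap.fst R M N)) f
  obtain ⟨h₂, hh₂⟩ := hN.factors (g ≫ ModuleCat.ofHom (LinearMap.snd R M N)) f
  refine ⟨ModuleCat.ofHom (LinearMap.prod h₁.hom h₂.hom), ?_⟩
  ext x
  · exact LinearMap.congr_fun (congrArg ModuleCat.Hom.hom hh₁) x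
  · exact LinearMap.congr_fun (congrArg ModuleCat.Hom.hom hh₂) x

end Inj

section CoextInj
variable {A : Type} {Λ : Type} [Ring A] [Ring Λ]

lemma injective_coext (φ : A →+* Λ) (hA : Injective (ModuleCat.of A A)) :
    Injective (ModuleCat.of Λ (CoextSet φ)) := by
  constructor
  intro X Y f g hg
  -- f : X ⟶ of Λ (CoextSet φ), g : X ⟶ Y mono
  let ev : CoextSet φ → Λ → A := fun h x => (h : Λ →+ A) x
  have hprop : ∀ (h : CoextSet φ) (a : A) (x : Λ), ev h (φ a * x) = a * ev h x :=
    fun h => h.2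
  let ε : (ModuleCat.restrictScalars φ).obj X ⟶ ModuleCat.of A A :=
    ModuleCat.ofHom (X := ((ModuleCat.restrictScalars φ).obj X : Type))
    { toFun := fun x => ev (f x) 1
      map_add' := fun x y => by
        show ev (f (x + y)) 1 = _
        exact (congrArg (fun h => ev h 1) (map_add (ConcreteCategory.hom f) x y)).trans rfl
      map_smul' := fun a x => by
        show ev (f (φ a • x)) 1 = a * ev (f x) 1
        refine (congrArg (fun h => ev h 1) (map_smul (ConcreteCategory.hom f) (φ a) (x : X))).trans ?_
        show ev (f x) (1 * φ a) = a * ev (f x) 1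
        rw [one_mul, ← mul_one (φ a)]
        exact hprop (f x) a 1 }
  obtain ⟨k, hk⟩ := hA.factors ε ((ModuleCat.restrictScalars φ).map g)
  -- F : Y ⟶ of Λ (CoextSet φ)
  let mk : Y → CoextSet φ := fun y =>
    ⟨{ toFun := fun x => k ((x • y : Y))
       map_zero' := by
         show k (((0 : Λ) • y : Y)) = 0
         rw [zero_smul]; exact map_zero k.hom
       map_add' := fun x x' => by
         show k (((x + x') • y : Y)) = k ((x • y : Y)) + k ((x' • y : Y))
         rw [add_smul]; exact map_add k.hom _ _ }, by
      intro a x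
      show k (((φ a * x) • y : Y)) = a • k ((x • y : Y))
      rw [mul_smul]
      exact map_smul k.hom a (show ((ModuleCat.restrictScalars φ).obj Y : Type) from (x • y : Y))⟩
  have mk_add : ∀ y y', mk (y + y') = mk y + mk y' := by
    intro y y'
    apply Subtype.ext; apply AddMonoidHom.ext; intro x
    show k ((x • (y + y') : Y)) = k ((x • y : Y)) + k ((x • y' : Y))
    rw [smul_add]
    exact map_add k.hom _ _
  let F : Y ⟶ ModuleCat.of Λ (CoextSet φ) := ModuleCat.ofHom
    { toFun := mk
      map_add' := mk_add
      map_smul' := fun t y => by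
        dsimp only [RingHom.id_apply]
        apply Subtype.ext; apply AddMonoidHom.ext; intro x
        show k ((x • (t • y) : Y)) = k (((x * t) • y : Y))
        rw [mul_smul] }
  refine ⟨F, ?_⟩
  apply ModuleCat.hom_ext; apply LinearMap.ext; intro x
  apply Subtype.ext; apply AddMonoidHom.ext; intro x'
  show k ((x' • g x : Y)) = ev (f x) x'
  rw [← map_smul (ConcreteCategory.hom g) x' x]
  have := LinearMap.congr_fun (congrArg ModuleCat.Hom.hom hk) (x' • x)
  refine this.trans ?_
  show ev (f (x' • x)) 1 = ev (f x) x'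
  rw [map_smul]
  show ev (f x) (1 * x') = ev (f x) x'
  rw [one_mul]

end CoextInj

section Main
variable {A : Type} {Λ : Type} [Ring A] [Ring Λ]

/-- restriction of scalars of `A` along `π` -/
def PiMod (π : Λ →+* A) : Type := A

instance {π : Λ →+* A} : AddCommGroup (PiMod π) := inferInstanceAs (AddCommGroup A)
instance {π : Λ →+* A} : Module Λ (PiMod π) := Module.compHom A π

variable {φ : A →+* Λ}

def Cev (h : CoextSet φ) (x : Λ) : A := (h : Λ →+ A) x

@[simp] lemma Cev_smul (t : Λ) (h : CoextSet φ) (x : Λ) :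
    Cev (t • h) x = Cev h (x * t) := rfl
@[simp] lemma Cev_add (h g : CoextSet φ) (x : Λ) :
    Cev (h + g) x = Cev h x + Cev g x := rfl
@[simp] lemma Cev_zero (x : Λ) : Cev (0 : CoextSet φ) x = 0 := rfl
lemma Cev_addx (h : CoextSet φ) (x y : Λ) : Cev h (x + y) = Cev h x + Cev h y :=
  map_add _ _ _
lemma Cev_phi (h : CoextSet φ) (a : A) (x : Λ) : Cev h (φ a * x) = a * Cev h x :=
  h.2 a x

lemma Cext' {h g : CoextSet φ} (H : ∀ x, Cev h x = Cev g x) : h = g :=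
  Subtype.ext (AddMonoidHom.ext H)

/-- constructor -/
def Cmk' (F : Λ → A) (h0 : F 0 = 0) (hadd : ∀ x y, F (x + y) = F x + F y)
    (hsm : ∀ (a : A) (x : Λ), F (φ a * x) = a * F x) : CoextSet φ :=
  ⟨{ toFun := F, map_zero' := h0, map_add' := hadd }, hsm⟩

@[simp] lemma Cev_mk' (F : Λ → A) (h0 hadd hsm) (x : Λ) :
    Cev (Cmk' F h0 hadd hsm : CoextSet φ) x = F x := rfl

lemma main_lemma (φ : A →+* Λ) (π : Λ →+* A) (hA : Injective (ModuleCat.of A A))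
    (e₀ e₁ e₂ : Λ) (c₀ c₁ c₂ : Λ →+ A)
    (hsm₀ : ∀ (a : A) (x : Λ), c₀ (φ a * x) = a * c₀ x)
    (hsm₁ : ∀ (a : A) (x : Λ), c₁ (φ a * x) = a * c₁ x)
    (hsm₂ : ∀ (a : A) (x : Λ), c₂ (φ a * x) = a * c₂ x)
    (h00 : c₀ e₀ = 1) (h01 : c₀ e₁ = 0) (h02 : c₀ e₂ = 0)
    (h10 : c₁ e₀ = 0) (h11 : c₁ e₁ = 1) (h12 : c₁ e₂ = 0)
    (h20 : c₂ e₀ = 0) (h21 : c₂ e₁ = 0) (h22 : c₂ e₂ = 1)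
    (hbasis : ∀ x : Λ, x = φ (c₀ x) * e₀ + φ (c₁ x) * e₁ + φ (c₂ x) * e₂)
    (he₀ : ∀ t : Λ, e₀ * t = φ (c₀ t) * e₀ + φ (c₁ t) * e₁)
    (he₁ : ∀ t : Λ, e₁ * t = φ (π t) * e₁)
    (he₂ : ∀ t : Λ, e₂ * t = φ (π t) * e₂)
    (hπ : ∀ t : Λ, π t = c₂ t)
    (hc₂ : ∀ x t : Λ, c₂ (x * t) = c₂ x * π t) :
    RegularInjDimLE1 Λ := by
  classical
  have hA0 : ∀ t : Λ, c₁ (e₀ * t) = c₁ t := fun t => by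
    rw [he₀ t, map_add, hsm₁, hsm₁, h10, h11, mul_zero, mul_one, zero_add]
  have hB0 : ∀ t : Λ, c₀ (e₀ * t) = c₀ t := fun t => by
    rw [he₀ t, map_add, hsm₀, hsm₀, h00, h01, mul_zero, mul_one, add_zero]
  have hA1 : ∀ t : Λ, c₁ (e₁ * t) = π t := fun t => by
    rw [he₁ t, hsm₁, h11, mul_one]
  have hA2 : ∀ t : Λ, c₁ (e₂ * t) = 0 := fun t => by
    rw [he₂ t, hsm₁, h12, mul_zero]
  have hB1 : ∀ t : Λ, c₀ (e₁ * t) = 0 := fun t => by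
    rw [he₁ t, hsm₀, h01, mul_zero]
  have hB2 : ∀ t : Λ, c₀ (e₂ * t) = 0 := fun t => by
    rw [he₂ t, hsm₀, h02, mul_zero]
  have evExpand : ∀ (h : (CoextSet φ)) (x : Λ),
      Cev h x = c₀ x * Cev h e₀ + c₁ x * Cev h e₁ + c₂ x * Cev h e₂ := by
    intro h x
    conv_lhs => rw [hbasis x]
    rw [Cev_addx, Cev_addx, Cev_phi, Cev_phi, Cev_phi]
  have mk1mem : ∀ t : Λ, ∀ (a : A) (x : Λ), c₁ (φ a * x * t) = a * c₁ (x * t) :=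
    fun t a x => by rw [mul_assoc]; exact hsm₁ a (x * t)
  have mk0mem : ∀ t : Λ, ∀ (a : A) (x : Λ), c₀ (φ a * x * t) = a * c₀ (x * t) :=
    fun t a x => by rw [mul_assoc]; exact hsm₀ a (x * t)
  let mk1 : Λ → (CoextSet φ) := fun t => Cmk' (fun x => c₁ (x * t))
    (by show c₁ (0 * t) = 0; rw [zero_mul, map_zero])
    (fun x y => by show c₁ ((x + y) * t) = c₁ (x * t) + c₁ (y * t)
                   rw [add_mul, map_add]) (mk1mem t)
  let mk0 : Λ → (CoextSet φ) := fun t => Cmk' (fun x => c₀ (x * t))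
    (by show c₀ (0 * t) = 0; rw [zero_mul, map_zero])
    (fun x y => by show c₀ ((x + y) * t) = c₀ (x * t) + c₀ (y * t)
                   rw [add_mul, map_add]) (mk0mem t)
  let fLM : Λ →ₗ[Λ] (CoextSet φ) × (CoextSet φ) :=
    { toFun := fun t => (mk1 t, mk0 t)
      map_add' := fun t s => by
        refine Prod.ext (Cext' fun x => ?_) (Cext' fun x => ?_)
        · rw [Prod.fst_add, Cev_add]
          show c₁ (x * (t + s)) = c₁ (x * t) + c₁ (x * s)
          rw [mul_add, map_add]
        · rw [Prod.snd_add, Cev_add]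
          show c₀ (x * (t + s)) = c₀ (x * t) + c₀ (x * s)
          rw [mul_add, map_add]
      map_smul' := fun s t => by
        dsimp only [RingHom.id_apply]
        refine Prod.ext (Cext' fun x => ?_) (Cext' fun x => ?_)
        · show c₁ (x * (s * t)) = c₁ (x * s * t)
          rw [mul_assoc]
        · show c₀ (x * (s * t)) = c₀ (x * s * t)
          rw [mul_assoc] }
  let gLM : ((CoextSet φ) × (CoextSet φ)) →ₗ[Λ] ((PiMod π) × (PiMod π) × (PiMod π)) :=
    { toFun := fun h => (show (PiMod π) from (Cev h.1 e₂ : A), show (PiMod π) from (Cev h.2 e₁ : A),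
        show (PiMod π) from (Cev h.2 e₂ : A))
      map_add' := fun h h' => rfl
      map_smul' := fun t h => by
        dsimp only [RingHom.id_apply]
        refine Prod.ext ?_ (Prod.ext ?_ ?_)
        · show (Cev h.1 (e₂ * t) : A) = π t * Cev h.1 e₂
          rw [he₂ t]; exact Cev_phi h.1 (π t) e₂
        · show (Cev h.2 (e₁ * t) : A) = π t * Cev h.2 e₁
          rw [he₁ t]; exact Cev_phi h.2 (π t) e₁
        · show (Cev h.2 (e₂ * t) : A) = π t * Cev h.2 e₂
          rw [he₂ t]; exact Cev_phi h.2 (π t) e₂ }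
  let f : ModuleCat.of Λ Λ ⟶ ModuleCat.of Λ ((CoextSet φ) × (CoextSet φ)) := ModuleCat.ofHom fLM
  let g : ModuleCat.of Λ ((CoextSet φ) × (CoextSet φ)) ⟶ ModuleCat.of Λ ((PiMod π) × (PiMod π) × (PiMod π)) := ModuleCat.ofHom gLM
  have hw : f ≫ g = 0 := by
    apply ModuleCat.hom_ext; apply LinearMap.ext; intro t
    show (show (PiMod π) from (Cev (mk1 t) e₂ : A), show (PiMod π) from (Cev (mk0 t) e₁ : A),
        show (PiMod π) from (Cev (mk0 t) e₂ : A)) = (0 : (PiMod π) × (PiMod π) × (PiMod π))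
    refine Prod.ext ?_ (Prod.ext ?_ ?_)
    · exact hA2 t
    · exact hB1 t
    · exact hB2 t
  let S : ShortComplex (ModuleCat Λ) := ShortComplex.mk f g hw
  have hmono : Mono S.f := by
    rw [ModuleCat.mono_iff_injective]
    have hker : ∀ t : Λ, fLM t = 0 → t = 0 := by
      intro t ht
      have h1 : mk1 t = 0 := congrArg Prod.fst ht
      have h0 : mk0 t = 0 := congrArg Prod.snd ht
      have v0 : c₀ t = 0 := by
        have := congrArg (fun q => Cev q e₀) h0
        simpa only [mk0, Cev_mk', Cev_zero, hB0 t] using this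
      have v1 : c₁ t = 0 := by
        have := congrArg (fun q => Cev q e₀) h1
        simpa only [mk1, Cev_mk', Cev_zero, hA0 t] using this
      have v2 : c₂ t = 0 := by
        have := congrArg (fun q => Cev q e₁) h1
        rw [← hπ t]
        simpa only [mk1, Cev_mk', Cev_zero, hA1 t] using this
      rw [hbasis t, v0, v1, v2, map_zero, zero_mul, zero_mul, zero_mul,
        add_zero, add_zero]
    intro a b hab
    have : a - b = 0 := hker _ (by rw [map_sub]; exact sub_eq_zero_of_eq hab)
    exact sub_eq_zero.mp this
  have hepi : Epi S.g := by
    rw [ModuleCat.epi_iff_surjective]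
    rintro ⟨w, v, w'⟩
    refine ⟨(Cmk' (fun x => c₂ x * (show A from w))
        (by show c₂ 0 * (show A from w) = 0; rw [map_zero, zero_mul])
        (fun x y => by show c₂ (x + y) * _ = c₂ x * _ + c₂ y * _
                       rw [map_add, add_mul])
        (fun a x => by show c₂ (φ a * x) * _ = a * (c₂ x * _)
                       rw [hsm₂, mul_assoc]),
      Cmk' (fun x => c₁ x * (show A from v) + c₂ x * (show A from w'))
        (by show c₁ 0 * _ + c₂ 0 * _ = 0
            rw [map_zero, map_zero, zero_mul, zero_mul, add_zero])
        (fun x y => by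
          show c₁ (x + y) * _ + c₂ (x + y) * _ =
            (c₁ x * _ + c₂ x * _) + (c₁ y * _ + c₂ y * _)
          rw [map_add, map_add, add_mul, add_mul]; exact add_add_add_comm _ _ _ _)
        (fun a x => by
          show c₁ (φ a * x) * _ + c₂ (φ a * x) * _ = a * (c₁ x * _ + c₂ x * _)
          rw [hsm₁, hsm₂, mul_add, mul_assoc, mul_assoc])), ?_⟩
    refine Prod.ext ?_ (Prod.ext ?_ ?_)
    · show c₂ e₂ * (show A from w) = (show A from w)
      rw [h22, one_mul]
    · show c₁ e₁ * (show A from v) + c₂ e₁ * (show A from w') = (show A from v)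
      rw [h11, h21, one_mul, zero_mul, add_zero]
    · show c₁ e₂ * (show A from v) + c₂ e₂ * (show A from w') = (show A from w')
      rw [h12, h22, zero_mul, one_mul, zero_add]
  have hexact : S.Exact := by
    rw [ShortComplex.moduleCat_exact_iff]
    rintro ⟨h₁, h₂⟩ hx
    have k1 : Cev h₁ e₂ = 0 := congrArg Prod.fst hx
    have k2 : Cev h₂ e₁ = 0 := congrArg (fun q => q.2.1) hx
    have k3 : Cev h₂ e₂ = 0 := congrArg (fun q => q.2.2) hx
    set t : Λ := φ (Cev h₂ e₀) * e₀ + φ (Cev h₁ e₀) * e₁ + φ (Cev h₁ e₁) * e₂ with hT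
    have hc0t : c₀ t = Cev h₂ e₀ := by
      rw [hT, map_add, map_add, hsm₀, hsm₀, hsm₀, h00, h01, h02,
        mul_one, mul_zero, mul_zero, add_zero, add_zero]
    have hc1t : c₁ t = Cev h₁ e₀ := by
      rw [hT, map_add, map_add, hsm₁, hsm₁, hsm₁, h10, h11, h12,
        mul_one, mul_zero, mul_zero, add_zero, zero_add]
    have hc2t : c₂ t = Cev h₁ e₁ := by
      rw [hT, map_add, map_add, hsm₂, hsm₂, hsm₂, h20, h21, h22,
        mul_one, mul_zero, mul_zero, zero_add, zero_add]
    refine ⟨t, ?_⟩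
    refine Prod.ext (Cext' fun x => ?_) (Cext' fun x => ?_)
    · show Cev (mk1 t) x = Cev h₁ x
      rw [evExpand (mk1 t) x, evExpand h₁ x]
      show c₀ x * c₁ (e₀ * t) + c₁ x * c₁ (e₁ * t) + c₂ x * c₁ (e₂ * t) = _
      rw [hA0, hA1, hA2, hπ t, hc1t, hc2t, k1, mul_zero]
    · show Cev (mk0 t) x = Cev h₂ x
      rw [evExpand (mk0 t) x, evExpand h₂ x]
      show c₀ x * c₀ (e₀ * t) + c₁ x * c₀ (e₁ * t) + c₂ x * c₀ (e₂ * t) = _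
      rw [hB0, hB1, hB2, hc0t, k2, k3, mul_zero]
  have hCinj : Injective (ModuleCat.of Λ (CoextSet φ)) := injective_coext φ hA
  have hPinj : Injective (ModuleCat.of Λ (PiMod π)) := by
    refine injective_of_retract (R := Λ) (M := (PiMod π)) (N := (CoextSet φ))
      { toFun := fun w => Cmk' (fun x => c₂ x * (show A from w))
          (by show c₂ 0 * (show A from w) = 0; rw [map_zero, zero_mul])
          (fun x y => by show c₂ (x + y) * _ = c₂ x * _ + c₂ y * _
                         rw [map_add, add_mul])
          (fun a x => by show c₂ (φ a * x) * _ = a * (c₂ x * _)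
                         rw [hsm₂, mul_assoc])
        map_add' := fun w w' => Cext' fun x => by
          show c₂ x * ((show A from w) + (show A from w')) =
            c₂ x * (show A from w) + c₂ x * (show A from w')
          rw [mul_add]
        map_smul' := fun s w => Cext' fun x => by
          show c₂ x * (π s * (show A from w)) = c₂ (x * s) * (show A from w)
          rw [hc₂ x s, mul_assoc] }
      { toFun := fun h => (show (PiMod π) from (Cev h e₂ : A))
        map_add' := fun h h' => rfl
        map_smul' := fun s h => by
          dsimp only [RingHom.id_apply]
          show (Cev h (e₂ * s) : A) = π s * Cev h e₂
          rw [he₂ s]; exact Cev_phi h (π s) e₂ }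
      (fun w => by
        show c₂ e₂ * (show A from w) = (show A from w)
        rw [h22, one_mul]) hCinj
  refine ⟨S, ShortComplex.ShortExact.mk' hexact hmono hepi, ?_, ?_, ⟨Iso.refl _⟩⟩
  · exact injective_prod hCinj hCinj
  · exact injective_prod hPinj (injective_prod hPinj hPinj)

end Main

section Inst


variable {A : Type} [Ring A]

@[simp] lemma T2_coe_mul (t s : T2 A) :
    ((t * s : T2 A) : Matrix (Fin 2) (Fin 2) A) = (t : Matrix (Fin 2) (Fin 2) A) * s := rfl
@[simp] lemma T2_coe_add (t s : T2 A) :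
    ((t + s : T2 A) : Matrix (Fin 2) (Fin 2) A) = (t : Matrix (Fin 2) (Fin 2) A) + s := rfl

def phiT : A →+* T2 A where
  toFun a := ⟨Matrix.diagonal (fun _ => a), Matrix.diagonal_apply_ne _ (by decide)⟩
  map_one' := Subtype.ext (show Matrix.diagonal (fun _ => (1 : A)) = _ from Matrix.diagonal_one)
  map_mul' a b := Subtype.ext (show Matrix.diagonal (fun _ => a * b) =
    Matrix.diagonal (fun _ => a) * Matrix.diagonal (fun _ => b) from
    (Matrix.diagonal_mul_diagonal _ _).symm)
  map_zero' := Subtype.ext (show Matrix.diagonal (fun _ => (0 : A)) = _ from Matrix.diagonal_zero)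
  map_add' a b := Subtype.ext (show Matrix.diagonal (fun _ => a + b) =
    Matrix.diagonal (fun _ => a) + Matrix.diagonal (fun _ => b) from
    by rw [Matrix.diagonal_add])

def piT : T2 A →+* A where
  toFun t := (t : Matrix (Fin 2) (Fin 2) A) 1 1
  map_one' := by show (1 : Matrix (Fin 2) (Fin 2) A) 1 1 = 1; simp
  map_mul' t s := by
    show ((t : Matrix (Fin 2) (Fin 2) A) * s) 1 1 = _
    rw [Matrix.mul_apply, Fin.sum_univ_two, t.2, zero_mul, zero_add]
  map_zero' := rfl
  map_add' t s := rfl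

def cT (i j : Fin 2) : T2 A →+ A where
  toFun t := (t : Matrix (Fin 2) (Fin 2) A) i j
  map_zero' := rfl
  map_add' t s := rfl

def eT0 : T2 A := ⟨!![1, 0; 0, 0], show (!![1, 0; 0, 0] : Matrix (Fin 2) (Fin 2) A) 1 0 = 0 by simp⟩
def eT1 : T2 A := ⟨!![0, 1; 0, 0], show (!![0, 1; 0, 0] : Matrix (Fin 2) (Fin 2) A) 1 0 = 0 by simp⟩
def eT2 : T2 A := ⟨!![0, 0; 0, 1], show (!![0, 0; 0, 1] : Matrix (Fin 2) (Fin 2) A) 1 0 = 0 by simp⟩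

theorem left_side (hsi_left : Injective (ModuleCat.of A A)) :
    RegularInjDimLE1 (T2 A) := by
  refine main_lemma phiT piT hsi_left eT0 eT1 eT2 (cT 0 0) (cT 0 1) (cT 1 1)
    ?_ ?_ ?_ ?_ ?_ ?_ ?_ ?_ ?_ ?_ ?_ ?_ ?_ ?_ ?_ ?_ ?_ ?_
  · -- hsm₀
    intro a x
    show ((Matrix.diagonal (fun _ => a) : Matrix (Fin 2) (Fin 2) A) * x.1) 0 0 = a * x.1 0 0
    rw [Matrix.diagonal_mul]
  · intro a x
    show ((Matrix.diagonal (fun _ => a) : Matrix (Fin 2) (Fin 2) A) * x.1) 0 1 = a * x.1 0 1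
    rw [Matrix.diagonal_mul]
  · intro a x
    show ((Matrix.diagonal (fun _ => a) : Matrix (Fin 2) (Fin 2) A) * x.1) 1 1 = a * x.1 1 1
    rw [Matrix.diagonal_mul]
  · show (!![1, 0; 0, 0] : Matrix (Fin 2) (Fin 2) A) 0 0 = 1; simp
  · show (!![0, 1; 0, 0] : Matrix (Fin 2) (Fin 2) A) 0 0 = 0; simp
  · show (!![0, 0; 0, 1] : Matrix (Fin 2) (Fin 2) A) 0 0 = 0; simp
  · show (!![1, 0; 0, 0] : Matrix (Fin 2) (Fin 2) A) 0 1 = 0; simp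
  · show (!![0, 1; 0, 0] : Matrix (Fin 2) (Fin 2) A) 0 1 = 1; simp
  · show (!![0, 0; 0, 1] : Matrix (Fin 2) (Fin 2) A) 0 1 = 0; simp
  · show (!![1, 0; 0, 0] : Matrix (Fin 2) (Fin 2) A) 1 1 = 0; simp
  · show (!![0, 1; 0, 0] : Matrix (Fin 2) (Fin 2) A) 1 1 = 0; simp
  · show (!![0, 0; 0, 1] : Matrix (Fin 2) (Fin 2) A) 1 1 = 1; simp
  · -- hbasis
    intro x
    apply Subtype.ext
    simp only [T2_coe_add, T2_coe_mul]
    show (x : Matrix (Fin 2) (Fin 2) A) =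
      Matrix.diagonal (fun _ => x.1 0 0) * !![1, 0; 0, 0] +
      Matrix.diagonal (fun _ => x.1 0 1) * !![0, 1; 0, 0] +
      Matrix.diagonal (fun _ => x.1 1 1) * !![0, 0; 0, 1]
    ext i j
    fin_cases i <;> fin_cases j <;>
      simp [Matrix.mul_apply, Fin.sum_univ_two, Matrix.diagonal]
    exact x.2
  · -- he₀
    intro t
    apply Subtype.ext
    simp only [T2_coe_add, T2_coe_mul]
    show (!![1, 0; 0, 0] : Matrix (Fin 2) (Fin 2) A) * t.1 =
      Matrix.diagonal (fun _ => t.1 0 0) * !![1, 0; 0, 0] +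
      Matrix.diagonal (fun _ => t.1 0 1) * !![0, 1; 0, 0]
    ext i j
    fin_cases i <;> fin_cases j <;>
      simp [Matrix.mul_apply, Fin.sum_univ_two, Matrix.diagonal]
  · intro t
    apply Subtype.ext
    simp only [T2_coe_mul]
    show (!![0, 1; 0, 0] : Matrix (Fin 2) (Fin 2) A) * t.1 =
      Matrix.diagonal (fun _ => t.1 1 1) * !![0, 1; 0, 0]
    ext i j
    fin_cases i <;> fin_cases j <;>
      simp [Matrix.mul_apply, Fin.sum_univ_two, Matrix.diagonal, t.2]
    exact t.2
  · intro t
    apply Subtype.ext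
    simp only [T2_coe_mul]
    show (!![0, 0; 0, 1] : Matrix (Fin 2) (Fin 2) A) * t.1 =
      Matrix.diagonal (fun _ => t.1 1 1) * !![0, 0; 0, 1]
    ext i j
    fin_cases i <;> fin_cases j <;>
      simp [Matrix.mul_apply, Fin.sum_univ_two, Matrix.diagonal, t.2]
    exact t.2
  · intro t; rfl
  · -- hc₂
    intro x t
    show ((x : Matrix (Fin 2) (Fin 2) A) * t.1) 1 1 = x.1 1 1 * t.1 1 1
    rw [Matrix.mul_apply, Fin.sum_univ_two, x.2, zero_mul, zero_add]

def piT0 : T2 A →+* A where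
  toFun t := (t : Matrix (Fin 2) (Fin 2) A) 0 0
  map_one' := by show (1 : Matrix (Fin 2) (Fin 2) A) 0 0 = 1; simp
  map_mul' t s := by
    show ((t : Matrix (Fin 2) (Fin 2) A) * s) 0 0 = _
    rw [Matrix.mul_apply, Fin.sum_univ_two, s.2, mul_zero, add_zero]
  map_zero' := rfl
  map_add' t s := rfl

def cTop (i j : Fin 2) : (T2 A)ᵐᵒᵖ →+ Aᵐᵒᵖ where
  toFun t := MulOpposite.op ((t.unop : Matrix (Fin 2) (Fin 2) A) i j)
  map_zero' := rfl
  map_add' t s := rfl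

theorem right_side (hsi_right : Injective (ModuleCat.of Aᵐᵒᵖ Aᵐᵒᵖ)) :
    RegularInjDimLE1 ((T2 A)ᵐᵒᵖ) := by
  refine main_lemma (RingHom.op phiT) (RingHom.op piT0) hsi_right
    (MulOpposite.op eT2) (MulOpposite.op eT1) (MulOpposite.op eT0)
    (cTop 1 1) (cTop 0 1) (cTop 0 0)
    ?_ ?_ ?_ ?_ ?_ ?_ ?_ ?_ ?_ ?_ ?_ ?_ ?_ ?_ ?_ ?_ ?_ ?_
  · intro a x
    apply MulOpposite.unop_injective
    show ((x.unop : Matrix (Fin 2) (Fin 2) A) * (Matrix.diagonal (fun _ => a.unop) : Matrix (Fin 2) (Fin 2) A)) 1 1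
      = (x.unop : Matrix (Fin 2) (Fin 2) A) 1 1 * a.unop
    rw [Matrix.mul_diagonal]
  · intro a x
    apply MulOpposite.unop_injective
    show ((x.unop : Matrix (Fin 2) (Fin 2) A) * (Matrix.diagonal (fun _ => a.unop) : Matrix (Fin 2) (Fin 2) A)) 0 1
      = (x.unop : Matrix (Fin 2) (Fin 2) A) 0 1 * a.unop
    rw [Matrix.mul_diagonal]
  · intro a x
    apply MulOpposite.unop_injective
    show ((x.unop : Matrix (Fin 2) (Fin 2) A) * (Matrix.diagonal (fun _ => a.unop) : Matrix (Fin 2) (Fin 2) A)) 0 0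
      = (x.unop : Matrix (Fin 2) (Fin 2) A) 0 0 * a.unop
    rw [Matrix.mul_diagonal]
  · apply MulOpposite.unop_injective
    show (!![0, 0; 0, 1] : Matrix (Fin 2) (Fin 2) A) 1 1 = 1; simp
  · apply MulOpposite.unop_injective
    show (!![0, 1; 0, 0] : Matrix (Fin 2) (Fin 2) A) 1 1 = 0; simp
  · apply MulOpposite.unop_injective
    show (!![1, 0; 0, 0] : Matrix (Fin 2) (Fin 2) A) 1 1 = 0; simp
  · apply MulOpposite.unop_injective
    show (!![0, 0; 0, 1] : Matrix (Fin 2) (Fin 2) A) 0 1 = 0; simp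
  · apply MulOpposite.unop_injective
    show (!![0, 1; 0, 0] : Matrix (Fin 2) (Fin 2) A) 0 1 = 1; simp
  · apply MulOpposite.unop_injective
    show (!![1, 0; 0, 0] : Matrix (Fin 2) (Fin 2) A) 0 1 = 0; simp
  · apply MulOpposite.unop_injective
    show (!![0, 0; 0, 1] : Matrix (Fin 2) (Fin 2) A) 0 0 = 0; simp
  · apply MulOpposite.unop_injective
    show (!![0, 1; 0, 0] : Matrix (Fin 2) (Fin 2) A) 0 0 = 0; simp
  · apply MulOpposite.unop_injective
    show (!![1, 0; 0, 0] : Matrix (Fin 2) (Fin 2) A) 0 0 = 1; simp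
  · intro x
    apply MulOpposite.unop_injective
    apply Subtype.ext
    show (x.unop : Matrix (Fin 2) (Fin 2) A) =
      (!![0, 0; 0, 1] * Matrix.diagonal (fun _ => x.unop.1 1 1) +
       !![0, 1; 0, 0] * Matrix.diagonal (fun _ => x.unop.1 0 1)) +
       !![1, 0; 0, 0] * Matrix.diagonal (fun _ => x.unop.1 0 0)
    ext i j
    fin_cases i <;> fin_cases j <;>
      simp [Matrix.mul_diagonal, Matrix.mul_apply, Fin.sum_univ_two]
    exact x.unop.2
  · intro t
    apply MulOpposite.unop_injective
    apply Subtype.ext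
    show (t.unop : Matrix (Fin 2) (Fin 2) A) * !![0, 0; 0, 1] =
      !![0, 0; 0, 1] * Matrix.diagonal (fun _ => t.unop.1 1 1) +
      !![0, 1; 0, 0] * Matrix.diagonal (fun _ => t.unop.1 0 1)
    ext i j
    fin_cases i <;> fin_cases j <;>
      simp [Matrix.mul_diagonal, Matrix.mul_apply, Fin.sum_univ_two]
  · intro t
    apply MulOpposite.unop_injective
    apply Subtype.ext
    show (t.unop : Matrix (Fin 2) (Fin 2) A) * !![0, 1; 0, 0] =
      !![0, 1; 0, 0] * Matrix.diagonal (fun _ => t.unop.1 0 0)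
    ext i j
    fin_cases i <;> fin_cases j <;>
      simp [Matrix.mul_diagonal, Matrix.mul_apply, Fin.sum_univ_two, t.unop.2]
    exact t.unop.2
  · intro t
    apply MulOpposite.unop_injective
    apply Subtype.ext
    show (t.unop : Matrix (Fin 2) (Fin 2) A) * !![1, 0; 0, 0] =
      !![1, 0; 0, 0] * Matrix.diagonal (fun _ => t.unop.1 0 0)
    ext i j
    fin_cases i <;> fin_cases j <;>
      simp [Matrix.mul_diagonal, Matrix.mul_apply, Fin.sum_univ_two, t.unop.2]
    exact t.unop.2
  · intro t; rfl
  · intro x t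
    apply MulOpposite.unop_injective
    show ((t.unop : Matrix (Fin 2) (Fin 2) A) * x.unop.1) 0 0 =
      t.unop.1 0 0 * x.unop.1 0 0
    rw [Matrix.mul_apply, Fin.sum_univ_two, x.unop.2, mul_zero, add_zero]

end Inst


/-- Let `A` be a self-injective artin algebra (the regular module
is injective on either side). Then `T₂(A)` is `1`-Gorenstein: the regular
modules of `T₂(A)` on both sides have injective dimension at most `1`. -/
theorem stmt17 (R : Type) [CommRing R] [IsArtinianRing R]
    (A : Type) [Ring A] [Algebra R A] [Module.Finite R A]
    (hsi_right : Injective (ModuleCat.of Aᵐᵒᵖ Aᵐᵒᵖ))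
    (hsi_left : Injective (ModuleCat.of A A)) :
    RegularInjDimLE1 ((T2 A)ᵐᵒᵖ) ∧ RegularInjDimLE1 (T2 A) :=
  ⟨right_side hsi_right, left_side hsi_left⟩
end
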